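/- Let M = (E, I) be a matroid with a total order < on E, and let T ∈ I. If S = D_M(T) is the set of elements dominated by T, then the greedy algorithm considering the elements of S in the order < selects exactly the set T; consequently if w : E → ℝ≥0 is decreasing with respect to < (e < f implies w(e) ≥ w(f)), then T is a maximum-weight independent subset of S. -/

import Mathlib

open Finset
open scoped Classical

structure FinMatroid (α : Type) [DecidableEq α] where
  E : Finset α
  Indep : Finset α → Prop
  indep_empty : Indep ∅
  subset_ground : ∀ ⦃X⦄, Indep X → X ⊆ E
  indep_mono : ∀ ⦃X Y⦄, X ⊆ Y → Indep Y → Indep X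
  indep_exchange : ∀ ⦃X Y⦄, Indep X → Indep Y → X.card < Y.card →
    ∃ e ∈ Y \ X, Indep (insert e X)

namespace FinMatroid

variable {α : Type} [DecidableEq α]

noncomputable def rank (M : FinMatroid α) (X : Finset α) : ℕ :=
  sSup {n | ∃ Y ⊆ X, M.Indep Y ∧ Y.card = n}

def spn (M : FinMatroid α) (X : Finset α) : Set α :=
  {e | e ∈ M.E ∧ M.rank (insert e X) = M.rank X}

end FinMatroid

def Dominates {α : Type} [DecidableEq α] (M : FinMatroid α) (lt : α → α → Prop)
    (E' : Finset α) (e : α) : Prop :=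
  e ∈ E' ∨ ∃ C : Finset α, C ⊆ E' ∧ e ∈ M.spn C ∧ ∀ c ∈ C, lt c e

noncomputable def greedy {α : Type} [DecidableEq α] (M : FinMatroid α)
    (l : List α) : Finset α :=
  l.foldl (fun X e => if M.Indep (insert e X) then insert e X else X) ∅

/-!
An element of `S = D_M(T)` outside `T` is spanned by elements of `T` that precede it. When the
greedy algorithm reaches it, its selection is the part of `T` seen so far, which contains those
elements, so it is rejected; elements of `T` are always accepted. For optimality, the exchange
axiom shows that below every threshold an independent `X ⊆ S` has at most as many elements as
`T`; pairing the largest element of `X` with the largest element of `T` not above it then gives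
`w(X) ≤ w(T)` for every nonnegative decreasing weight `w`.
-/

namespace FinMatroid

variable {α : Type} [DecidableEq α] (M : FinMatroid α)

lemma rank_le_card (X : Finset α) : M.rank X ≤ #X :=
  csSup_le' fun _ ⟨_, hYX, _, hn⟩ => hn ▸ card_le_card hYX

variable {M}

lemma card_le_rank {X Y : Finset α} (hY : M.Indep Y) (hYX : Y ⊆ X) : #Y ≤ M.rank X :=
  le_csSup ⟨#X, fun _ ⟨_, hZX, _, hn⟩ => hn ▸ card_le_card hZX⟩ ⟨Y, hYX, hY, rfl⟩

lemma not_indep_insert_of_mem_spn {C : Finset α} {e : α} (he : e ∉ C) (hspn : e ∈ M.spn C) :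
    ¬ M.Indep (insert e C) := by
  intro h
  have hcard := card_le_rank h subset_rfl
  rw [hspn.2, card_insert_of_notMem he] at hcard
  have := M.rank_le_card C
  omega

lemma not_indep_insert_of_dominates {lt : α → α → Prop} {T X : Finset α} {e : α} (he : e ∉ T)
    (hdom : Dominates M lt T e) (hX : ∀ t ∈ T, lt t e → t ∈ X) : ¬ M.Indep (insert e X) := by
  rcases hdom with heT | ⟨C, hCT, hspn, hClt⟩
  · exact absurd heT he
  have hCX : C ⊆ X := fun c hc => hX c (hCT hc) (hClt c hc)
  exact fun h => not_indep_insert_of_mem_spn (fun hc => he (hCT hc)) hspn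
    (M.indep_mono (insert_subset_insert e hCX) h)

lemma card_filter_le_card_filter_of_dominates {lt : α → α → Prop} {T X : Finset α}
    (hT : M.Indep T) (hX : M.Indep X) (hdom : ∀ x ∈ X, Dominates M lt T x)
    (P : α → Prop) [DecidablePred P] (hP : ∀ x y, lt x y → P y → P x) :
    #(X.filter P) ≤ #(T.filter P) := by
  by_contra! hlt
  obtain ⟨e, he, hindep⟩ := M.indep_exchange (M.indep_mono (filter_subset P T) hT)
    (M.indep_mono (filter_subset P X) hX) hlt
  obtain ⟨heXP, heTP⟩ := mem_sdiff.mp he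
  obtain ⟨heX, hPe⟩ := mem_filter.mp heXP
  have heT : e ∉ T := fun heT => heTP (mem_filter.mpr ⟨heT, hPe⟩)
  exact not_indep_insert_of_dominates heT (hdom e heX)
    (fun t ht hte => mem_filter.mpr ⟨ht, hP t e hte hPe⟩) hindep

end FinMatroid

open FinMatroid

noncomputable def greedyFrom {α : Type} [DecidableEq α] (M : FinMatroid α) (X : Finset α)
    (l : List α) : Finset α :=
  l.foldl (fun X e => if M.Indep (insert e X) then insert e X else X) X

lemma greedyFrom_eq_of_dominates {α : Type} [DecidableEq α] {M : FinMatroid α}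
    {lt : α → α → Prop} [Std.Asymm lt] {T : Finset α} (hT : M.Indep T) :
    ∀ (l : List α) (X : Finset α), X ⊆ T → (∀ t ∈ T, t ∉ X → t ∈ l) → l.Pairwise lt →
      (∀ e ∈ l, Dominates M lt T e) → greedyFrom M X l = T := by
  intro l
  induction l with
  | nil =>
    intro X hXT hTX _ _
    exact hXT.antisymm fun t ht => by_contra fun htX => List.not_mem_nil (hTX t ht htX)
  | cons e l ih =>
    intro X hXT hTX hsort hdom
    obtain ⟨hhead, hsort⟩ := List.pairwise_cons.mp hsort
    have hdom' : ∀ f ∈ l, Dominates M lt T f := fun f hf => hdom f (List.mem_cons_of_mem e hf)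
    simp only [greedyFrom, List.foldl_cons]
    by_cases heT : e ∈ T
    · rw [if_pos (M.indep_mono (insert_subset heT hXT) hT)]
      refine ih _ (insert_subset heT hXT) (fun t ht htX => ?_) hsort hdom'
      rcases List.mem_cons.mp (hTX t ht (fun h => htX (mem_insert_of_mem h))) with rfl | h
      · exact absurd (mem_insert_self t X) htX
      · exact h
    · have hbelow : ∀ t ∈ T, lt t e → t ∈ X := fun t ht hte => by_contra fun htX =>
        (List.mem_cons.mp (hTX t ht htX)).elim (fun h => heT (h ▸ ht))
          (fun h => asymm hte (hhead t h))
      rw [if_neg (not_indep_insert_of_dominates heT (hdom e List.mem_cons_self) hbelow)]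
      refine ih X hXT (fun t ht htX => ?_) hsort hdom'
      exact (List.mem_cons.mp (hTX t ht htX)).resolve_left fun h => heT (h ▸ ht)

section Majorization

variable {α β : Type} [LinearOrder α] [AddCommMonoid β] [PartialOrder β] [IsOrderedAddMonoid β]

lemma card_filter_le_erase_of_insert_max {s T : Finset α} {m t : α} (hs : ∀ x ∈ s, x < m)
    (ht : t ∈ T) (htm : t ≤ m) (ht_max : ∀ u ∈ T, u ≤ m → u ≤ t)
    (hcount : ∀ a, #((insert m s).filter (· ≤ a)) ≤ #(T.filter (· ≤ a))) (a : α) :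
    #(s.filter (· ≤ a)) ≤ #((T.erase t).filter (· ≤ a)) := by
  have hms : m ∉ s := fun h => lt_irrefl m (hs m h)
  have hins : ∀ b,
      #((insert m s).filter (· ≤ b)) = #(s.filter (· ≤ b)) + if m ≤ b then 1 else 0 := by
    intro b
    rw [filter_insert]
    split_ifs
    · exact card_insert_of_notMem fun h => hms (mem_filter.mp h).1
    · rfl
  have hsm : #(s.filter (· ≤ m)) = #s := by
    rw [filter_true_of_mem fun x hx => (hs x hx).le]
  have hTm : t ≤ a → #(T.filter (· ≤ m)) ≤ #(T.filter (· ≤ a)) := fun hta =>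
    card_le_card fun u hu => mem_filter.mpr
      ⟨(mem_filter.mp hu).1, (ht_max u (mem_filter.mp hu).1 (mem_filter.mp hu).2).trans hta⟩
  have hsa := card_le_card (filter_subset (· ≤ a) s)
  have h1 := hcount a
  have h2 := hcount m
  rw [hins] at h1 h2
  rw [filter_erase, card_erase_eq_ite]
  simp only [mem_filter, ht, true_and, le_refl, if_true] at h1 h2 ⊢
  by_cases hta : t ≤ a
  · have := hTm hta
    split_ifs at h1 ⊢ <;> omega
  · have hma : ¬ m ≤ a := fun hma => hta (htm.trans hma)
    simp only [hma, hta, if_false] at h1 ⊢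
    omega

lemma sum_le_sum_of_card_filter_le {w : α → β} (hw0 : ∀ e, 0 ≤ w e) (hw : Antitone w)
    (X : Finset α) : ∀ T : Finset α, (∀ a, #(X.filter (· ≤ a)) ≤ #(T.filter (· ≤ a))) →
      ∑ e ∈ X, w e ≤ ∑ e ∈ T, w e := by
  induction X using Finset.induction_on_max with
  | empty => exact fun T _ => by simpa using sum_nonneg fun e _ => hw0 e
  | insert m s hs ih =>
    intro T hcount
    have hne : (T.filter (· ≤ m)).Nonempty := by
      have hm : m ∈ (insert m s).filter (· ≤ m) := mem_filter.mpr ⟨mem_insert_self m s, le_rfl⟩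
      exact card_pos.mp ((card_pos.mpr ⟨m, hm⟩).trans_le (hcount m))
    set t := (T.filter (· ≤ m)).max' hne
    obtain ⟨ht, htm⟩ := mem_filter.mp ((T.filter (· ≤ m)).max'_mem hne)
    have ht_max : ∀ u ∈ T, u ≤ m → u ≤ t := fun u hu hum =>
      (T.filter (· ≤ m)).le_max' u (mem_filter.mpr ⟨hu, hum⟩)
    calc ∑ e ∈ insert m s, w e = w m + ∑ e ∈ s, w e :=
          sum_insert fun h => lt_irrefl m (hs m h)
      _ ≤ w t + ∑ e ∈ T.erase t, w e :=
          add_le_add (hw htm) (ih _ (card_filter_le_erase_of_insert_max hs ht htm ht_max hcount))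
      _ = ∑ e ∈ T, w e := add_sum_erase T w ht

end Majorization

theorem stmt6_general {α : Type} [DecidableEq α] (M : FinMatroid α)
    (lt : α → α → Prop) [IsStrictTotalOrder α lt]
    (T : Finset α) (hT : M.Indep T)
    (l : List α) (hsort : l.Pairwise lt)
    (hmem : ∀ e, e ∈ l ↔ e ∈ M.E ∧ Dominates M lt T e) :
    greedy M l = T ∧
      ∀ w : α → ℝ, (∀ e, 0 ≤ w e) → (∀ e f, lt e f → w f ≤ w e) →
        ∀ X ⊆ l.toFinset, M.Indep X → ∑ e ∈ X, w e ≤ ∑ e ∈ T, w e := by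
  have hdom : ∀ e ∈ l, Dominates M lt T e := fun e he => ((hmem e).mp he).2
  refine ⟨greedyFrom_eq_of_dominates hT l ∅ (empty_subset T)
    (fun t ht _ => (hmem t).mpr ⟨M.subset_ground hT ht, Or.inl ht⟩) hsort hdom, ?_⟩
  intro w hw0 hwd X hXl hX
  let : LinearOrder α := linearOrderOfSTO lt
  refine sum_le_sum_of_card_filter_le hw0 (antitone_iff_forall_lt.mpr hwd) X T fun a => ?_
  exact card_filter_le_card_filter_of_dominates hT hX
    (fun x hx => hdom x (List.mem_toFinset.mp (hXl hx))) (· ≤ a)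
    (fun _ _ hxy hya => (lt_of_lt_of_le hxy hya).le)

theorem stmt6 {α : Type} [DecidableEq α] (M : FinMatroid α)
    (lt : α → α → Prop) [IsStrictTotalOrder α lt]
    (T : Finset α) (hT : M.Indep T)
    (l : List α) (hnd : l.Nodup) (hsort : l.Pairwise lt)
    (hmem : ∀ e, e ∈ l ↔ e ∈ M.E ∧ Dominates M lt T e) :
    greedy M l = T ∧
      ∀ w : α → ℝ, (∀ e, 0 ≤ w e) → (∀ e f, lt e f → w f ≤ w e) →
        ∀ X ⊆ l.toFinset, M.Indep X → ∑ e ∈ X, w e ≤ ∑ e ∈ T, w e :=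
  stmt6_general M lt T hT l hsort hmem
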